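/- arXiv:2007.09223 — 2 statements merged into one kernel-verified Lean document; each statement's English description precedes it below -/
import Mathlib

section
/- For μ > 0 and σ > 0, with θ = 2μ/σ², g(x) = (1-x)/μ - σ²(e^{-θx} - e^{-θ})/(2μ²), and p(x) = θ(e^{θ} - e^{θx})/(1 + θe^{θ} - e^{θ}), the identity g(0) · ∫₀¹ σ² (g'(x))² p(x) dx = e^{-θ}(e^{-θ} - 5e^{θ} + 2θe^{θ} + 4 + 4θ)/(μ²θ²) holds. -/
/-!
Since `σ² = 2μ/θ`, the integrand is `2 / (μ D) · (e^{-θx} - 1)² (e^θ - e^{θx})` with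
`D = 1 + θ e^θ - e^θ`; expanded, it is a combination of `e^{-2θx}`, `e^{-θx}`, `1`, `e^{θx}`, each
integrated explicitly. Moreover `g 0 = e^{-θ} D / (μ θ)`, so the normalising constant `D` of `p`
cancels.
-/

open Real intervalIntegral

lemma one_add_mul_exp_sub_exp_pos {θ : ℝ} (hθ : θ ≠ 0) : 0 < 1 + θ * exp θ - exp θ := by
  have h := add_one_lt_exp (neg_ne_zero.mpr hθ)
  rw [exp_neg] at h
  have h' := mul_lt_mul_of_pos_right h (exp_pos θ)
  rw [inv_mul_cancel₀ (exp_pos θ).ne'] at h'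
  linarith

lemma integral_exp_mul_zero_one {c : ℝ} (hc : c ≠ 0) :
    ∫ x in (0 : ℝ)..1, exp (c * x) = (exp c - 1) / c := by
  rw [integral_comp_mul_left (fun x => exp x) hc, integral_exp, mul_zero, mul_one, exp_zero,
    smul_eq_mul, inv_mul_eq_div]

lemma deriv_sub_div_exp_neg {μ θ : ℝ} (hμ : μ ≠ 0) (hθ : θ ≠ 0) (d x : ℝ) :
    deriv (fun x => (1 - x) / μ - (exp (-(θ * x)) - d) / (μ * θ)) x
      = (exp (-(θ * x)) - 1) / μ := by
  have hexp : HasDerivAt (fun x => exp (-(θ * x))) (exp (-(θ * x)) * -θ) x := by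
    simpa using ((hasDerivAt_id x).const_mul θ).neg.exp
  have h : HasDerivAt (fun x => (1 - x) / μ - (exp (-(θ * x)) - d) / (μ * θ))
      (-1 / μ - exp (-(θ * x)) * -θ / (μ * θ)) x :=
    (((hasDerivAt_id x).const_sub 1).div_const μ).sub ((hexp.sub_const d).div_const (μ * θ))
  rw [h.deriv]
  field_simp
  ring

lemma integral_sq_exp_neg_sub_one_mul {θ : ℝ} (hθ : θ ≠ 0) :
    ∫ x in (0 : ℝ)..1, (exp (-(θ * x)) - 1) ^ 2 * (exp θ - exp (θ * x))
      = (exp (-θ) - 5 * exp θ + 2 * θ * exp θ + 4 + 4 * θ) / (2 * θ) := by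
  have hexpand : ∀ x : ℝ, (exp (-(θ * x)) - 1) ^ 2 * (exp θ - exp (θ * x))
      = exp θ * exp (-(2 * θ) * x) - (1 + 2 * exp θ) * exp (-θ * x) + (2 + exp θ)
        - exp (θ * x) := by
    intro x
    have h2 : exp (-(2 * θ) * x) = exp (-(θ * x)) ^ 2 := by rw [← exp_nat_mul]; ring_nf
    have h1 : exp (-(θ * x)) * exp (θ * x) = 1 := by rw [← exp_add]; simp
    rw [h2, neg_mul]
    linear_combination (2 - exp (-(θ * x))) * h1
  rw [integral_congr fun x _ => hexpand x, integral_sub, integral_add, integral_sub,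
    integral_const_mul, integral_const_mul, integral_const,
    integral_exp_mul_zero_one (by simpa using hθ), integral_exp_mul_zero_one (neg_ne_zero.mpr hθ),
    integral_exp_mul_zero_one hθ]
  · simp only [exp_neg, two_mul, exp_add]
    field_simp
    ring
  all_goals exact Continuous.intervalIntegrable (by fun_prop) 0 1

theorem stmt_11 (μ σ : ℝ) (hμ : 0 < μ) (hσ : 0 < σ) (θ : ℝ) (hθ : θ = 2 * μ / σ ^ 2)
    (g p : ℝ → ℝ)
    (hg : ∀ x, g x = (1 - x) / μ -
      σ ^ 2 * (Real.exp (-(θ * x)) - Real.exp (-θ)) / (2 * μ ^ 2))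
    (hp : ∀ x, p x = θ * (Real.exp θ - Real.exp (θ * x)) /
      (1 + θ * Real.exp θ - Real.exp θ)) :
    g 0 * ∫ x in (0:ℝ)..1, σ ^ 2 * (deriv g x) ^ 2 * p x =
      Real.exp (-θ) * (Real.exp (-θ) - 5 * Real.exp θ + 2 * θ * Real.exp θ + 4 + 4 * θ) /
        (μ ^ 2 * θ ^ 2) := by
  have hθ0 : θ ≠ 0 := by rw [hθ]; positivity
  have hσ2 : σ ^ 2 = 2 * μ / θ := by rw [hθ]; field_simp
  have hD := (one_add_mul_exp_sub_exp_pos hθ0).ne'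
  have hg' : g = fun x => (1 - x) / μ - (exp (-(θ * x)) - exp (-θ)) / (μ * θ) := by
    funext x
    rw [hg, hσ2]
    field_simp
  have hintegrand : ∀ x, σ ^ 2 * (deriv g x) ^ 2 * p x = 2 / (μ * (1 + θ * exp θ - exp θ))
      * ((exp (-(θ * x)) - 1) ^ 2 * (exp θ - exp (θ * x))) := by
    intro x
    rw [hg', deriv_sub_div_exp_neg hμ.ne' hθ0, hp, hσ2]
    field_simp
  rw [integral_congr fun x _ => hintegrand x, integral_const_mul,
    integral_sq_exp_neg_sub_one_mul hθ0, hg, hσ2]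
  simp only [exp_neg, mul_zero, neg_zero, exp_zero, sub_zero]
  field_simp
  ring
end

section
/- For θ > 0, K(θ) := e^{θ}(e^{-θ} - 5e^{θ} + 2θe^{θ} + 4 + 4θ)/(1 + θe^{θ} - e^{θ})² is strictly less than 2/3. -/
theorem stmt_13 (θ : ℝ) (hθ : 0 < θ) :
    Real.exp θ * (Real.exp (-θ) - 5 * Real.exp θ + 2 * θ * Real.exp θ + 4 + 4 * θ) /
        (1 + θ * Real.exp θ - Real.exp θ) ^ 2 < 2 / 3 := by
  set x := Real.exp θ with hxdef
  have hx : 0 < x := Real.exp_pos θ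
  -- Taylor lower bound of degree 5
  have hx5 : 1 + θ + θ^2/2 + θ^3/6 + θ^4/24 + θ^5/120 ≤ x := by
    have h := Real.sum_le_exp_of_nonneg hθ.le 6
    simp [Finset.sum_range_succ, Nat.factorial] at h
    linarith
  -- denominator base positivity
  have hD : 0 < 1 + θ * x - x := by
    have h := Real.add_one_lt_exp (x := -θ) (by linarith)
    have h2 : (-θ + 1) * x < Real.exp (-θ) * x := by
      exact mul_lt_mul_of_pos_right h hx
    rw [← Real.exp_add] at h2
    simp at h2
    nlinarith
  have hA : 0 < 2*θ^2 - 10*θ + 17 := by nlinarith [sq_nonneg (2*θ - 5)]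
  set p : ℝ := 1 + θ + θ^2/2 + θ^3/6 + θ^4/24 + θ^5/120 with hp
  have hgp : 8*θ + 16 ≤ (2*θ^2 - 10*θ + 17) * (2*p) := by
    rw [hp]
    have hq : 0 ≤ (θ - θ^2/6)^2 := sq_nonneg _
    nlinarith [pow_pos hθ 4, pow_pos hθ 5, pow_pos hθ 7]
  have h1 : 0 ≤ (x - p) * ((2*θ^2 - 10*θ + 17) * (x + p) - (8*θ + 16)) := by
    apply mul_nonneg (by linarith)
    have : (2*θ^2 - 10*θ + 17) * (2*p) ≤ (2*θ^2 - 10*θ + 17) * (x + p) := by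
      apply mul_le_mul_of_nonneg_left (by linarith) hA.le
    linarith
  have hfp5 : 0 < (1:ℝ)/15*θ^5 + 23/360*θ^6 + 1/20*θ^7 + 77/2880*θ^8 + 1/90*θ^9
      + 47/14400*θ^10 + 1/1440*θ^11 + 1/7200*θ^12 := by positivity
  have key : 0 < (2*θ^2 - 10*θ + 17) * x^2 - (8*θ + 16) * x - 1 := by
    have hid : (2*θ^2 - 10*θ + 17) * x^2 - (8*θ + 16) * x - 1
        = ((1:ℝ)/15*θ^5 + 23/360*θ^6 + 1/20*θ^7 + 77/2880*θ^8 + 1/90*θ^9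
            + 47/14400*θ^10 + 1/1440*θ^11 + 1/7200*θ^12)
          + (x - p) * ((2*θ^2 - 10*θ + 17) * (x + p) - (8*θ + 16)) := by
      rw [hp]; ring
    linarith [hid ▸ add_pos_of_pos_of_nonneg hfp5 h1]
  rw [div_lt_iff₀ (by positivity), Real.exp_neg]
  have hinv : x * x⁻¹ = 1 := mul_inv_cancel₀ hx.ne'
  nlinarith [key, hinv, hx]
end
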